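/- Define L_M(t) = ∫_0^1 L_D(xt) dx where L_D(t) = log((e^t - 1)/t). Then L_M'(t) = (L_D(t) - L_M(t))/t for all t ≠ 0, and L_M''(t) > 0 for all t > 0, so that for every x in (1/4, 1/2) there exists a unique t_x > 0 with L_M'(t_x) = x. -/

import Mathlib

open Set

noncomputable def L_D (t : ℝ) : ℝ := Real.log ((Real.exp t - 1) / t)

noncomputable def L_M (t : ℝ) : ℝ := ∫ x in (0:ℝ)..1, L_D (x * t)

/-!
Substituting `s = x t` gives `t L_M(t) = ∫₀ᵗ L_D`, hence the formula for `L_M'`, and then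
`t² L_M'(t) = L_N(t) := t L_D(t) - ∫₀ᵗ L_D` and `t³ L_M''(t) = L_G(t) := t² L_D'(t) - 2 L_N(t)`.
Now `L_G(0⁺) = 0` and `L_G'(t) = t² L_D''(t) > 0`, because `L_D` is strictly convex:
`t² eᵗ < (eᵗ - 1)²` is `|t| < 2 |sinh (t/2)|`. So `L_M'' > 0`.
At `0⁺`, L'Hôpital and `L_D'(0⁺) = 1/2` give `L_M' → 1/4`. At infinity,
`L_N'(t) = t - 1 + t / (eᵗ - 1)` with `0 < t / (eᵗ - 1) ≤ 1` gives `t²/2 - t ≤ L_N(t) ≤ t²/2`,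
so `L_M' → 1/2`. The intermediate value theorem and strict monotonicity of `L_M'` finish.
-/

open Real Filter Topology

lemma exp_sub_one_ne_zero {t : ℝ} (ht : t ≠ 0) : exp t - 1 ≠ 0 :=
  sub_ne_zero.2 fun h => ht (exp_eq_one_iff t |>.1 h)

lemma exp_sub_one_pos {t : ℝ} (ht : 0 < t) : 0 < exp t - 1 :=
  sub_pos.2 (one_lt_exp_iff.2 ht)

lemma exp_sub_one_div_pos {t : ℝ} (ht : t ≠ 0) : 0 < (exp t - 1) / t := by
  rcases ht.lt_or_gt with h | h
  · exact div_pos_of_neg_of_neg (sub_neg.2 (exp_lt_one_iff.2 h)) h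
  · exact div_pos (exp_sub_one_pos h) h

lemma tendsto_exp_sub_one_div_nhdsNE :
    Tendsto (fun t => (exp t - 1) / t) (𝓝[≠] 0) (𝓝 1) := by
  have h := hasDerivAt_iff_tendsto_slope.1 (hasDerivAt_exp 0)
  rw [exp_zero] at h
  refine h.congr fun t => ?_
  simp [slope_def_field]

lemma continuous_L_D : Continuous L_D := by
  refine continuous_iff_continuousAt.2 fun t => ?_
  rcases eq_or_ne t 0 with rfl | ht
  · rw [← continuousWithinAt_compl_self, ContinuousWithinAt, show L_D 0 = log 1 by simp [L_D]]
    exact (continuousAt_log one_ne_zero).tendsto.comp tendsto_exp_sub_one_div_nhdsNE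
  · exact (((continuous_exp.sub continuous_const).continuousAt).div continuousAt_id ht).log
      (exp_sub_one_div_pos ht).ne'

noncomputable def L_D' (t : ℝ) : ℝ := exp t / (exp t - 1) - 1 / t

lemma hasDerivAt_L_D {t : ℝ} (ht : t ≠ 0) : HasDerivAt L_D (L_D' t) t := by
  have h := (((hasDerivAt_exp t).sub_const 1).div (hasDerivAt_id t) ht).log
    (exp_sub_one_div_pos ht).ne'
  refine h.congr_deriv ?_
  have := exp_sub_one_ne_zero ht
  simp only [id, Pi.div_apply, L_D']
  field_simp

lemma hasDerivAt_L_D' {t : ℝ} (ht : t ≠ 0) :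
    HasDerivAt L_D' (1 / t ^ 2 - exp t / (exp t - 1) ^ 2) t := by
  have hne := exp_sub_one_ne_zero ht
  have h := ((hasDerivAt_exp t).div ((hasDerivAt_exp t).sub_const 1) hne).sub
    ((hasDerivAt_const t (1:ℝ)).div (hasDerivAt_id t) ht)
  refine h.congr_deriv ?_
  simp only [id]
  field_simp
  ring

lemma sq_mul_exp_lt_sq_exp_sub_one {t : ℝ} (ht : t ≠ 0) :
    t ^ 2 * exp t < (exp t - 1) ^ 2 := by
  have hexp : exp (t / 2) ^ 2 = exp t := by rw [← exp_nat_mul]; ring_nf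
  have hsinh : exp t - 1 = 2 * sinh (t / 2) * exp (t / 2) := by
    have h : exp (-(t / 2)) * exp (t / 2) = 1 := by rw [← exp_add]; simp
    rw [sinh_eq]
    linear_combination h - hexp
  have hlt : (t / 2) ^ 2 < sinh (t / 2) ^ 2 := by
    rw [← sq_abs, ← sq_abs (sinh _), abs_sinh]
    exact pow_lt_pow_left₀ (self_lt_sinh_iff.2 (by positivity)) (abs_nonneg _) two_ne_zero
  rw [hsinh, mul_pow, mul_pow, hexp]
  nlinarith [exp_pos t]

noncomputable def L_F (t : ℝ) : ℝ := ∫ s in (0:ℝ)..t, L_D s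

lemma hasDerivAt_L_F (t : ℝ) : HasDerivAt L_F (L_D t) t :=
  intervalIntegral.integral_hasDerivAt_right (continuous_L_D.intervalIntegrable _ _)
    (continuous_L_D.stronglyMeasurableAtFilter _ _) continuous_L_D.continuousAt

lemma L_M_eq_L_F_div {t : ℝ} (ht : t ≠ 0) : L_M t = L_F t / t := by
  rw [L_M, intervalIntegral.integral_comp_mul_right L_D ht]
  simp [L_F, inv_mul_eq_div]

lemma hasDerivAt_L_M {t : ℝ} (ht : t ≠ 0) : HasDerivAt L_M ((L_D t - L_M t) / t) t := by
  have h := (hasDerivAt_L_F t).div (hasDerivAt_id t) ht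
  have heq : L_F / id =ᶠ[𝓝 t] L_M := by
    filter_upwards [isOpen_compl_singleton.mem_nhds ht] with s hs
    exact (L_M_eq_L_F_div hs).symm
  refine (h.congr_of_eventuallyEq heq.symm).congr_deriv ?_
  rw [L_M_eq_L_F_div ht]
  simp only [id]
  field_simp

noncomputable def L_N (t : ℝ) : ℝ := t * L_D t - L_F t

lemma continuous_L_N : Continuous L_N :=
  (continuous_id.mul continuous_L_D).sub
    (continuous_iff_continuousAt.2 fun t => (hasDerivAt_L_F t).continuousAt)

lemma L_N_zero : L_N 0 = 0 := by simp [L_N, L_F]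

lemma tendsto_L_N_zero : Tendsto L_N (𝓝 0) (𝓝 0) :=
  continuous_L_N.tendsto' 0 0 L_N_zero

lemma hasDerivAt_L_N {t : ℝ} (ht : t ≠ 0) : HasDerivAt L_N (t * L_D' t) t := by
  refine (((hasDerivAt_id t).mul (hasDerivAt_L_D ht)).sub (hasDerivAt_L_F t)).congr_deriv ?_
  simp only [id]
  ring

lemma deriv_L_M_eq {t : ℝ} (ht : t ≠ 0) : deriv L_M t = L_N t / t ^ 2 := by
  rw [(hasDerivAt_L_M ht).deriv, L_M_eq_L_F_div ht, L_N]
  field_simp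

noncomputable def L_G (t : ℝ) : ℝ := t ^ 2 * L_D' t - 2 * L_N t

lemma hasDerivAt_deriv_L_M {t : ℝ} (ht : t ≠ 0) :
    HasDerivAt (deriv L_M) (L_G t / t ^ 3) t := by
  have h := (hasDerivAt_L_N ht).div (hasDerivAt_pow 2 t) (pow_ne_zero 2 ht)
  have heq : (fun s => L_N s / s ^ 2) =ᶠ[𝓝 t] deriv L_M := by
    filter_upwards [isOpen_compl_singleton.mem_nhds ht] with s hs
    exact (deriv_L_M_eq hs).symm
  refine (h.congr_of_eventuallyEq heq.symm).congr_deriv ?_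
  rw [L_G]
  field_simp
  ring

lemma hasDerivAt_L_G {t : ℝ} (ht : t ≠ 0) :
    HasDerivAt L_G (t ^ 2 * (1 / t ^ 2 - exp t / (exp t - 1) ^ 2)) t := by
  refine (((hasDerivAt_pow 2 t).mul (hasDerivAt_L_D' ht)).sub
    ((hasDerivAt_L_N ht).const_mul 2)).congr_deriv ?_
  ring

lemma L_D'_eq_div {t : ℝ} (ht : t ≠ 0) :
    L_D' t = (t * exp t - exp t + 1) / (t * (exp t - 1)) := by
  have := exp_sub_one_ne_zero ht
  rw [L_D']
  field_simp
  ring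

lemma tendsto_L_D'_nhdsNE : Tendsto L_D' (𝓝[≠] 0) (𝓝 (1 / 2)) := by
  have hexp : Tendsto exp (𝓝[≠] 0) (𝓝 1) := by
    simpa using (continuous_exp.tendsto 0).mono_left nhdsWithin_le_nhds
  have hdiv : Tendsto (fun t => t * exp t / (exp t - 1 + t * exp t)) (𝓝[≠] 0) (𝓝 (1 / 2)) := by
    have h := hexp.div (tendsto_exp_sub_one_div_nhdsNE.add hexp) (by norm_num)
    rw [one_add_one_eq_two] at h
    refine h.congr' ?_
    filter_upwards [self_mem_nhdsWithin] with t (ht : t ≠ 0)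
    rw [Pi.div_apply, ← mul_div_mul_left _ _ ht, mul_add, mul_div_cancel₀ _ ht]
  refine (HasDerivAt.lhopital_zero_nhdsNE (f := fun t => t * exp t - exp t + 1)
    (f' := fun t => t * exp t) (g := fun t => t * (exp t - 1))
    (g' := fun t => exp t - 1 + t * exp t) ?_ ?_ ?_ ?_ ?_ hdiv).congr' ?_
  · refine Eventually.of_forall fun t => ?_
    refine ((((hasDerivAt_id t).mul (hasDerivAt_exp t)).sub (hasDerivAt_exp t)).add_const
      1).congr_deriv ?_
    simp only [id]
    ring
  · refine Eventually.of_forall fun t => ?_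
    refine ((hasDerivAt_id t).mul ((hasDerivAt_exp t).sub_const 1)).congr_deriv ?_
    simp only [id]
    ring
  · filter_upwards [self_mem_nhdsWithin] with t (ht : t ≠ 0)
    have h : exp t - 1 + t * exp t = t * ((exp t - 1) / t + exp t) := by field_simp
    rw [h]
    exact mul_ne_zero ht (add_pos (exp_sub_one_div_pos ht) (exp_pos t)).ne'
  · have hc : Continuous fun t => t * exp t - exp t + 1 := by fun_prop
    simpa using (hc.tendsto 0).mono_left nhdsWithin_le_nhds
  · have hc : Continuous fun t => t * (exp t - 1) := by fun_prop
    simpa using (hc.tendsto 0).mono_left nhdsWithin_le_nhds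
  · filter_upwards [self_mem_nhdsWithin] with t (ht : t ≠ 0)
    exact (L_D'_eq_div ht).symm

lemma tendsto_L_D'_nhdsGT : Tendsto L_D' (𝓝[>] 0) (𝓝 (1 / 2)) :=
  tendsto_L_D'_nhdsNE.mono_left (nhdsWithin_mono 0 fun _ h => (mem_Ioi.1 h).ne')

lemma tendsto_L_G_nhdsGT : Tendsto L_G (𝓝[>] 0) (𝓝 0) := by
  have hsq : Tendsto (fun t : ℝ => t ^ 2) (𝓝[>] 0) (𝓝 0) := by
    simpa using ((continuous_pow 2).tendsto (0:ℝ)).mono_left nhdsWithin_le_nhds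
  have h := (hsq.mul tendsto_L_D'_nhdsGT).sub
    ((tendsto_L_N_zero.mono_left nhdsWithin_le_nhds).const_mul 2)
  rwa [zero_mul, mul_zero, sub_zero] at h

lemma L_G_pos {t : ℝ} (ht : 0 < t) : 0 < L_G t := by
  have hzero : L_G 0 = 0 := by simp [L_G, L_N_zero]
  have hcont : ContinuousOn L_G (Ici 0) := by
    intro s hs
    rcases (mem_Ici.1 hs).eq_or_lt with rfl | hs
    · rw [← continuousWithinAt_Ioi_iff_Ici, ContinuousWithinAt, hzero]
      exact tendsto_L_G_nhdsGT
    · exact (hasDerivAt_L_G hs.ne').continuousAt.continuousWithinAt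
  have hmono : StrictMonoOn L_G (Ici 0) := by
    refine strictMonoOn_of_hasDerivWithinAt_pos (convex_Ici 0) hcont
      (fun s hs => (hasDerivAt_L_G (ne_of_gt (by simpa using hs))).hasDerivWithinAt) fun s hs => ?_
    rw [interior_Ici, mem_Ioi] at hs
    have := sq_mul_exp_lt_sq_exp_sub_one hs.ne'
    have := exp_sub_one_pos hs
    refine mul_pos (by positivity) (sub_pos.2 ?_)
    rw [div_lt_div_iff₀ (by positivity) (by positivity)]
    linarith
  simpa [hzero] using hmono self_mem_Ici ht.le ht

lemma deriv_deriv_L_M_pos {t : ℝ} (ht : 0 < t) : 0 < deriv (deriv L_M) t := by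
  rw [(hasDerivAt_deriv_L_M ht.ne').deriv]
  exact div_pos (L_G_pos ht) (by positivity)

lemma continuousOn_deriv_L_M : ContinuousOn (deriv L_M) (Ioi 0) := fun _ ht =>
  (hasDerivAt_deriv_L_M (ne_of_gt ht)).continuousAt.continuousWithinAt

lemma strictMonoOn_deriv_L_M : StrictMonoOn (deriv L_M) (Ioi 0) :=
  strictMonoOn_of_deriv_pos (convex_Ioi 0) continuousOn_deriv_L_M fun t ht =>
    deriv_deriv_L_M_pos (by simpa using ht)

lemma tendsto_deriv_L_M_nhdsGT : Tendsto (deriv L_M) (𝓝[>] 0) (𝓝 (1 / 4)) := by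
  have hdiv : Tendsto (fun t => t * L_D' t / (2 * t)) (𝓝[>] 0) (𝓝 (1 / 4)) := by
    have h := tendsto_L_D'_nhdsGT.div_const 2
    rw [show (1 / 2 / 2 : ℝ) = 1 / 4 by norm_num] at h
    refine h.congr' ?_
    filter_upwards [self_mem_nhdsWithin] with t (ht : 0 < t)
    field_simp
  refine (HasDerivAt.lhopital_zero_nhdsGT (f := L_N) (g := fun t => t ^ 2)
    (f' := fun t => t * L_D' t) (g' := fun t => 2 * t) ?_ ?_ ?_ ?_ ?_ hdiv).congr' ?_
  · filter_upwards [self_mem_nhdsWithin] with t (ht : 0 < t)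
    exact hasDerivAt_L_N ht.ne'
  · refine Eventually.of_forall fun t => ?_
    simpa using hasDerivAt_pow 2 t
  · filter_upwards [self_mem_nhdsWithin] with t (ht : 0 < t)
    positivity
  · exact tendsto_L_N_zero.mono_left nhdsWithin_le_nhds
  · simpa using ((continuous_pow 2).tendsto (0:ℝ)).mono_left nhdsWithin_le_nhds
  · filter_upwards [self_mem_nhdsWithin] with t (ht : 0 < t)
    exact (deriv_L_M_eq ht.ne').symm

lemma mul_L_D'_eq {t : ℝ} (ht : t ≠ 0) : t * L_D' t = t - 1 + t / (exp t - 1) := by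
  have := exp_sub_one_ne_zero ht
  rw [L_D']
  field_simp
  ring

lemma le_of_hasDerivAt_nonneg {f f' : ℝ → ℝ} {a t : ℝ} (hf : ContinuousOn f (Ici a))
    (hf' : ∀ x, a < x → HasDerivAt f (f' x) x) (hf'₀ : ∀ x, a < x → 0 ≤ f' x) (ht : a ≤ t) :
    f a ≤ f t :=
  monotoneOn_of_hasDerivWithinAt_nonneg (convex_Ici a) hf
    (fun x hx => (hf' x (by simpa using hx)).hasDerivWithinAt)
    (fun x hx => hf'₀ x (by simpa using hx)) self_mem_Ici ht ht

lemma L_N_mem_Icc {t : ℝ} (ht : 0 ≤ t) : L_N t ∈ Icc (t ^ 2 / 2 - t) (t ^ 2 / 2) := by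
  have hcont : ContinuousOn L_N (Ici 0) := continuous_L_N.continuousOn
  have hderiv (x : ℝ) (hx : 0 < x) : HasDerivAt L_N (x - 1 + x / (exp x - 1)) x :=
    mul_L_D'_eq hx.ne' ▸ hasDerivAt_L_N hx.ne'
  constructor
  · have h := le_of_hasDerivAt_nonneg (f := fun x => L_N x - x ^ 2 / 2 + x)
      (hcont.sub (by fun_prop) |>.add continuousOn_id)
      (fun x hx => ((hderiv x hx).sub ((hasDerivAt_pow 2 x).div_const 2)).add (hasDerivAt_id x))
      (fun x hx => by
        have := div_pos hx (exp_sub_one_pos hx)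
        norm_num
        linarith) ht
    simp only [L_N_zero] at h
    linarith
  · have h := le_of_hasDerivAt_nonneg (f := fun x => x ^ 2 / 2 - L_N x)
      ((continuousOn_pow 2).div_const 2 |>.sub hcont)
      (fun x hx => ((hasDerivAt_pow 2 x).div_const 2).sub (hderiv x hx))
      (fun x hx => by
        have : x / (exp x - 1) ≤ 1 :=
          (div_le_one (exp_sub_one_pos hx)).2 (by linarith [add_one_le_exp x])
        norm_num
        linarith) ht
    simp only [L_N_zero] at h
    linarith

lemma tendsto_deriv_L_M_atTop : Tendsto (deriv L_M) atTop (𝓝 (1 / 2)) := by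
  have hlow : Tendsto (fun t : ℝ => 1 / 2 - t⁻¹) atTop (𝓝 (1 / 2)) := by
    simpa using tendsto_const_nhds.sub (tendsto_inv_atTop_zero (𝕜 := ℝ))
  refine tendsto_of_tendsto_of_tendsto_of_le_of_le' hlow tendsto_const_nhds ?_ ?_
  all_goals filter_upwards [eventually_gt_atTop 0] with t ht
  all_goals have h := L_N_mem_Icc ht.le
  all_goals rw [deriv_L_M_eq ht.ne']
  · rw [le_div_iff₀ (by positivity)]
    have : (1 / 2 - t⁻¹) * t ^ 2 = t ^ 2 / 2 - t := by field_simp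
    linarith [h.1]
  · rw [div_le_iff₀ (by positivity)]
    linarith [h.2]

lemma existsUnique_eq_of_strictMonoOn_Ioi {f : ℝ → ℝ} {a l u x : ℝ}
    (hf : ContinuousOn f (Ioi a)) (hmono : StrictMonoOn f (Ioi a))
    (hl : Tendsto f (𝓝[>] a) (𝓝 l)) (hu : Tendsto f atTop (𝓝 u)) (hx : x ∈ Ioo l u) :
    ∃! t, a < t ∧ f t = x := by
  obtain ⟨b, hbx, hb⟩ := ((hl.eventually_lt_const hx.1).and self_mem_nhdsWithin).exists
  obtain ⟨c, hxc, hbc⟩ := ((hu.eventually_const_lt hx.2).and (eventually_ge_atTop b)).exists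
  obtain ⟨t, hbt, htx⟩ :=
    intermediate_value_Icc hbc (hf.mono fun s hs => hb.trans_le hs.1) ⟨hbx.le, hxc.le⟩
  have hat : a < t := hb.trans_le hbt.1
  exact ⟨t, ⟨hat, htx⟩, fun s hs => hmono.injOn hs.1 hat (hs.2.trans htx.symm)⟩

theorem L_M_properties :
    (∀ t : ℝ, t ≠ 0 → deriv L_M t = (L_D t - L_M t) / t) ∧
    (∀ t : ℝ, 0 < t → 0 < deriv (deriv L_M) t) ∧
    (∀ x : ℝ, x ∈ Set.Ioo (1 / 4 : ℝ) (1 / 2) →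
      ∃! t : ℝ, 0 < t ∧ deriv L_M t = x) :=
  ⟨fun _ ht => (hasDerivAt_L_M ht).deriv, fun _ => deriv_deriv_L_M_pos,
    fun _ => existsUnique_eq_of_strictMonoOn_Ioi continuousOn_deriv_L_M strictMonoOn_deriv_L_M
      tendsto_deriv_L_M_nhdsGT tendsto_deriv_L_M_atTop⟩
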